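/- arXiv:2507.06505 — 2 statements merged into one kernel-verified Lean document; each statement's English description precedes it below -/
import Mathlib

section
/- Assume the upper Weyl bound Σ_{k=1}^N φ_k(x)² ≤ c₂ N for all x ∈ Ω, and assume there are points x_1, …, x_M ∈ Ω with M ≥ 2 and a constant A ≥ 1 such that ‖P‖_∞ ≤ A · max_{1≤j≤M} |P(x_j)| for every P in the linear span of φ_1, …, φ_N. Then there is a constant C depending only on A and c₂ such that E[‖P_a‖_∞ / ‖P_a‖_2] ≤ C (ln M)^{1/2}. (Upper bound in the average Nikolskii factor N^{ave}_{2,∞}(𝒫_n) ≍ √(ln n).) -/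
/-!
Split according to whether `|a| ≥ √N / 3`. There the Marcinkiewicz–Zygmund hypothesis gives
`‖P_a‖_∞ / |a| ≤ (3A / √N) max_j |P_a(x_j)|`; each `P_a(x_j)` is a centred Gaussian of variance
`∑_k φ_k(x_j)² ≤ c₂ N`, so the sub-Gaussian maximal inequality bounds the expectation of the
maximum by `2 √(c₂ N log M)`. Otherwise Cauchy–Schwarz and the Weyl bound give
`‖P_a‖_∞ / |a| ≤ √(c₂ N)`, while the event `|a|² < N / 9` has probability at most
`e^{N/6} 2^{-N} ≤ N^{-1/2}` by a Chernoff bound with `E exp(-(3/2)|a|²) = 2^{-N}`.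
-/

open MeasureTheory ProbabilityTheory

/-- The law of a random vector with `N` independent standard Gaussian `N(0,1)` coordinates. -/
noncomputable def stdGaussian (N : ℕ) : Measure (Fin N → ℝ) :=
  Measure.pi fun _ => gaussianReal 0 1

open Real
open scoped NNReal

namespace ProbabilityTheory.HasSubgaussianMGF

variable {Ω : Type*} [MeasurableSpace Ω] {μ : Measure Ω} {X : Ω → ℝ} {c d : ℝ≥0}

lemma mono (h : HasSubgaussianMGF X c μ) (hcd : c ≤ d) : HasSubgaussianMGF X d μ where
  integrable_exp_mul := h.integrable_exp_mul
  mgf_le t := (h.mgf_le t).trans <| exp_le_exp.2 <| by gcongr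

end ProbabilityTheory.HasSubgaussianMGF

lemma exp_mul_iSup_abs_le_sum {ι : Type*} [Fintype ι] [Nonempty ι] (X : ι → ℝ) (t : ℝ) :
    exp (t * ⨆ i, |X i|) ≤ ∑ i, (exp (t * X i) + exp (-t * X i)) := by
  obtain ⟨i, hi⟩ := exists_eq_ciSup_of_finite (f := fun i => |X i|)
  rw [← hi]
  refine le_trans ?_ (Finset.single_le_sum (fun j _ => by positivity) (Finset.mem_univ i))
  rcases abs_cases (X i) with ⟨h, _⟩ | ⟨h, _⟩ <;> rw [h]
  · exact le_add_of_nonneg_right (exp_nonneg _)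
  · rw [mul_neg, ← neg_mul]; exact le_add_of_nonneg_left (exp_nonneg _)

section SubgaussianMax

variable {Ω ι : Type*} [MeasurableSpace Ω] {μ : Measure Ω} [Fintype ι] {X : ι → Ω → ℝ}

lemma integrable_iSup_abs_of_hasSubgaussianMGF {c : ι → ℝ≥0}
    (h : ∀ i, HasSubgaussianMGF (X i) (c i) μ) :
    Integrable (fun ω => ⨆ i, |X i ω|) μ := by
  refine (integrable_finsetSum Finset.univ fun i _ => (h i).integrable.abs).mono'
    (AEMeasurable.iSup fun i => (h i).aemeasurable.abs).aestronglyMeasurable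
    (ae_of_all _ fun ω => ?_)
  rw [norm_of_nonneg (Real.iSup_nonneg fun i => abs_nonneg _)]
  exact Real.iSup_le (fun i => Finset.single_le_sum (f := fun i => |X i ω|)
    (fun j _ => abs_nonneg _) (Finset.mem_univ i)) (Finset.sum_nonneg fun i _ => abs_nonneg _)

variable [IsProbabilityMeasure μ] [Nonempty ι] {c : ℝ≥0}

theorem integral_iSup_abs_le_of_hasSubgaussianMGF (h : ∀ i, HasSubgaussianMGF (X i) c μ)
    {t : ℝ} (ht : 0 < t) :
    ∫ ω, ⨆ i, |X i ω| ∂μ ≤ (log (2 * Fintype.card ι) + c * t ^ 2 / 2) / t := by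
  set Y := fun ω => ⨆ i, |X i ω|
  have hY_int : Integrable Y μ := integrable_iSup_abs_of_hasSubgaussianMGF h
  have hpair_int : ∀ i, Integrable (fun ω => exp (t * X i ω) + exp (-t * X i ω)) μ :=
    fun i => ((h i).integrable_exp_mul t).add ((h i).integrable_exp_mul (-t))
  have hexp_int : Integrable (fun ω => exp (t * Y ω)) μ := by
    refine (integrable_finsetSum Finset.univ fun i _ => hpair_int i).mono'
      (continuous_exp.comp_aestronglyMeasurable (hY_int.1.const_mul t))
      (ae_of_all _ fun ω => ?_)
    rw [norm_of_nonneg (exp_nonneg _)]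
    exact exp_mul_iSup_abs_le_sum (X · ω) t
  have hjensen : exp (t * ∫ ω, Y ω ∂μ) ≤ ∫ ω, exp (t * Y ω) ∂μ := by
    rw [← integral_const_mul]
    exact (convexOn_exp.map_integral_le continuous_exp.continuousOn isClosed_univ
      (ae_of_all _ fun _ => Set.mem_univ _) (hY_int.const_mul t) hexp_int)
  have hmgf : ∫ ω, exp (t * Y ω) ∂μ ≤ 2 * Fintype.card ι * exp (c * t ^ 2 / 2) := calc
    _ ≤ ∫ ω, ∑ i, (exp (t * X i ω) + exp (-t * X i ω)) ∂μ :=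
      integral_mono hexp_int (integrable_finsetSum _ fun i _ => hpair_int i)
        fun ω => exp_mul_iSup_abs_le_sum (X · ω) t
    _ = ∑ i, (mgf (X i) μ t + mgf (X i) μ (-t)) := by
      rw [integral_finsetSum _ fun i _ => hpair_int i]
      exact Finset.sum_congr rfl fun i _ =>
        integral_add ((h i).integrable_exp_mul t) ((h i).integrable_exp_mul (-t))
    _ ≤ ∑ _i : ι, 2 * exp (c * t ^ 2 / 2) := Finset.sum_le_sum fun i _ => by
      have := (h i).mgf_le (-t)
      rw [neg_sq] at this
      linarith [(h i).mgf_le t]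
    _ = _ := by rw [Finset.sum_const, Finset.card_univ, nsmul_eq_mul]; ring
  have hlog := (le_log_iff_exp_le (by positivity)).2 (hjensen.trans hmgf)
  rw [log_mul (by positivity) (exp_pos _).ne', log_exp] at hlog
  rwa [le_div_iff₀ ht, mul_comm]

theorem integral_iSup_abs_le_sqrt_of_hasSubgaussianMGF (h : ∀ i, HasSubgaussianMGF (X i) c μ) :
    ∫ ω, ⨆ i, |X i ω| ∂μ ≤ √(2 * c * log (2 * Fintype.card ι)) := by
  rcases eq_zero_or_pos c with rfl | hc
  · refine (integral_eq_zero_of_ae ?_).trans_le (sqrt_nonneg _)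
    filter_upwards [ae_all_iff.2 fun i => (h i).ae_eq_zero_of_hasSubgaussianMGF_zero] with ω hω
    simp [hω]
  set L := log (2 * Fintype.card ι)
  have hL : 0 < L := log_pos (by
    have := Fintype.card_pos (α := ι)
    norm_cast; omega)
  set s := √(2 * c * L)
  have hs : 0 < s := sqrt_pos.2 (by positivity)
  have hs2 : s ^ 2 = 2 * c * L := sq_sqrt (by positivity)
  have hc' : (0 : ℝ) < c := hc
  -- `t = √(2 c L) / c` minimises `(L + c t² / 2) / t`.
  refine (integral_iSup_abs_le_of_hasSubgaussianMGF h (div_pos hs hc')).trans_eq ?_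
  change (L + _) / _ = s
  clear_value L s
  field_simp
  rw [hs2]
  ring

end SubgaussianMax

lemma hasSubgaussianMGF_id_gaussianReal (v : ℝ≥0) : HasSubgaussianMGF id v (gaussianReal 0 v) where
  integrable_exp_mul := integrable_exp_mul_gaussianReal
  mgf_le t := by simp [mgf_id_gaussianReal]

lemma integral_exp_neg_mul_sq_gaussianReal {s : ℝ} (hs : 0 < 1 + 2 * s) :
    ∫ x, exp (-s * x ^ 2) ∂gaussianReal 0 1 = (√(1 + 2 * s))⁻¹ := by
  have hpdf (x : ℝ) : gaussianPDFReal 0 1 x * exp (-s * x ^ 2)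
      = (√(2 * π))⁻¹ * exp (-((1 + 2 * s) / 2) * x ^ 2) := by
    rw [gaussianPDFReal, mul_assoc, ← exp_add]
    congr 2
    · simp
    · push_cast; ring
  simp_rw [integral_gaussianReal_eq_integral_smul one_ne_zero, smul_eq_mul, hpdf,
    integral_const_mul, integral_gaussian]
  rw [div_div_eq_mul_div, sqrt_div' _ hs.le, mul_comm π, sqrt_mul' _ pi_pos.le]
  field_simp

instance (N : ℕ) : IsProbabilityMeasure (stdGaussian N) := by
  rw [_root_.stdGaussian]
  infer_instance

lemma iIndepFun_stdGaussian {N : ℕ} : iIndepFun (fun k (a : Fin N → ℝ) => a k) (stdGaussian N) :=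
  iIndepFun_pi (X := fun _ => id) fun _ => aemeasurable_id

lemma hasSubgaussianMGF_apply_stdGaussian {N : ℕ} (k : Fin N) :
    HasSubgaussianMGF (fun a : Fin N → ℝ => a k) 1 (stdGaussian N) := by
  rw [← HasSubgaussianMGF.id_map_iff (measurable_pi_apply k).aemeasurable, _root_.stdGaussian,
    (measurePreserving_eval (fun _ => gaussianReal 0 1) k).map_eq]
  exact hasSubgaussianMGF_id_gaussianReal 1

lemma hasSubgaussianMGF_sum_mul_stdGaussian {N : ℕ} (c : Fin N → ℝ) :
    HasSubgaussianMGF (fun a => ∑ k, a k * c k) (∑ k, ‖c k‖₊ ^ 2) (stdGaussian N) :=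
  ((HasSubgaussianMGF.sum_of_iIndepFun (s := Finset.univ)
    (iIndepFun_stdGaussian.comp (fun k x => c k * x) fun k => measurable_const_mul (c k))
    fun k _ => (hasSubgaussianMGF_apply_stdGaussian k).const_mul (c k)).congr
    (ae_of_all _ fun a => Finset.sum_congr rfl fun k _ => mul_comm _ _)).mono
    (Finset.sum_le_sum fun k _ => le_of_eq <| NNReal.eq <| (mul_one _).trans (by simp))

lemma integral_iSup_abs_sum_mul_stdGaussian_le {M N : ℕ} (hM : 2 ≤ M) (c : Fin M → Fin N → ℝ)
    {v : ℝ} (hv : ∀ j, ∑ k, c j k ^ 2 ≤ v) :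
    ∫ a, ⨆ j, |∑ k, a k * c j k| ∂stdGaussian N ≤ 2 * √v * √(log M) := by
  have : Nonempty (Fin M) := ⟨⟨0, by omega⟩⟩
  have hv0 : 0 ≤ v := (Finset.sum_nonneg fun k _ => sq_nonneg _).trans (hv ⟨0, by omega⟩)
  have hsub (j : Fin M) :
      HasSubgaussianMGF (fun a => ∑ k, a k * c j k) v.toNNReal (stdGaussian N) :=
    (hasSubgaussianMGF_sum_mul_stdGaussian (c j)).mono <| by
      simpa [Real.le_toNNReal_iff_coe_le hv0] using hv j
  have hM' : (2 : ℝ) ≤ M := by exact_mod_cast hM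
  have hlogM : 0 ≤ log M := log_nonneg (by linarith)
  have hlog : log (2 * M) ≤ 2 * log M := by
    rw [log_mul two_ne_zero (by positivity)]
    linarith [log_le_log two_pos hM']
  refine (integral_iSup_abs_le_sqrt_of_hasSubgaussianMGF hsub).trans ?_
  rw [Fintype.card_fin, Real.coe_toNNReal _ hv0]
  calc √(2 * v * log (2 * M)) ≤ √((2 * √v * √(log M)) ^ 2) := by
        rw [mul_pow, mul_pow, sq_sqrt hv0, sq_sqrt hlogM]
        exact sqrt_le_sqrt (by nlinarith)
    _ = 2 * √v * √(log M) := sqrt_sq (by positivity)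

lemma integral_exp_mul_sub_sum_sq_stdGaussian {N : ℕ} {s : ℝ} (hs : 0 < 1 + 2 * s) (ρ : ℝ) :
    ∫ a, exp (s * (ρ - ∑ k, a k ^ 2)) ∂stdGaussian N = exp (s * ρ) * (√(1 + 2 * s))⁻¹ ^ N := by
  simp_rw [mul_sub, sub_eq_add_neg, exp_add, ← neg_mul, Finset.mul_sum, exp_sum]
  rw [integral_const_mul]
  congr 1
  rw [_root_.stdGaussian, integral_fintype_prod_eq_prod (fun _ x => exp (-s * x ^ 2)),
    Finset.prod_const, Finset.card_univ, Fintype.card_fin, integral_exp_neg_mul_sq_gaussianReal hs]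

lemma integrable_exp_mul_sub_sum_sq_stdGaussian {N : ℕ} {s : ℝ} (hs : 0 < 1 + 2 * s) (ρ : ℝ) :
    Integrable (fun a => exp (s * (ρ - ∑ k, a k ^ 2))) (stdGaussian N) :=
  .of_integral_ne_zero <| by
    rw [integral_exp_mul_sub_sum_sq_stdGaussian hs]
    have := sqrt_pos.2 hs
    positivity

lemma sqrt_mul_exp_div_six_le_two_pow (N : ℕ) : √N * exp (N / 6) ≤ 2 ^ N := by
  have he : exp (1 / 3) ≤ 2 := by
    refine le_of_pow_le_pow_left₀ three_ne_zero zero_le_two ?_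
    rw [← exp_nat_mul, show ((3 : ℕ) : ℝ) * (1 / 3) = 1 by norm_num]
    linarith [exp_one_lt_d9]
  refine le_of_pow_le_pow_left₀ two_ne_zero (by positivity) ?_
  calc (√N * exp (N / 6)) ^ 2 = N * exp (1 / 3) ^ N := by
        rw [mul_pow, sq_sqrt N.cast_nonneg, ← exp_nat_mul, ← exp_nat_mul]
        ring_nf
    _ ≤ 2 ^ N * 2 ^ N := by
        gcongr
        exact_mod_cast Nat.lt_two_pow_self.le
    _ = (2 ^ N) ^ 2 := by ring

lemma sqrt_mul_integral_exp_sub_sum_sq_le_one (N : ℕ) :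
    √N * ∫ a, exp (3 / 2 * (N / 9 - ∑ k, a k ^ 2)) ∂stdGaussian N ≤ 1 := by
  rw [integral_exp_mul_sub_sum_sq_stdGaussian (by norm_num),
    show (1 + 2 * (3 / 2) : ℝ) = 2 ^ 2 by norm_num, sqrt_sq zero_le_two, inv_pow, ← mul_assoc,
    ← div_eq_mul_inv, div_le_one (by positivity), show 3 / 2 * (N / 9 : ℝ) = N / 6 by ring]
  exact sqrt_mul_exp_div_six_le_two_pow N

lemma div_le_div_add_mul_exp {S r Y ρ σ s : ℝ} (hr : 0 ≤ r) (hρ : 0 < ρ) (hs : 0 ≤ s)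
    (hS : 0 ≤ S) (hσ : 0 ≤ σ) (hSY : S ≤ Y) (hSr : S ≤ σ * r) :
    S / r ≤ Y / ρ + σ * exp (s * (ρ ^ 2 - r ^ 2)) := by
  have hY : 0 ≤ Y := hS.trans hSY
  rcases le_or_gt ρ r with hρr | hrρ
  · calc S / r ≤ Y / r := by gcongr
      _ ≤ Y / ρ := by gcongr
      _ ≤ Y / ρ + σ * exp (s * (ρ ^ 2 - r ^ 2)) := le_add_of_nonneg_right (by positivity)
  · calc S / r ≤ σ := div_le_of_le_mul₀ hr hσ hSr
      _ ≤ σ * exp (s * (ρ ^ 2 - r ^ 2)) :=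
        le_mul_of_one_le_right hσ (one_le_exp (mul_nonneg hs (by nlinarith)))
      _ ≤ Y / ρ + σ * exp (s * (ρ ^ 2 - r ^ 2)) := le_add_of_nonneg_left (by positivity)

lemma integral_div_sqrt_sum_sq_le {N : ℕ} (hN : 0 < N) {S Y : (Fin N → ℝ) → ℝ} {A σ : ℝ}
    (hY : Integrable Y (stdGaussian N)) (hσ : 0 ≤ σ) (hS : ∀ a, 0 ≤ S a)
    (hSY : ∀ a, S a ≤ A * Y a) (hSσ : ∀ a, S a ≤ σ * √(∑ k, a k ^ 2)) :
    ∫ a, S a / √(∑ k, a k ^ 2) ∂stdGaussian N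
      ≤ 3 * A / √N * ∫ a, Y a ∂stdGaussian N + σ / √N := by
  have hN' : 0 < √N := sqrt_pos.2 (Nat.cast_pos.2 hN)
  have hexp_int := integrable_exp_mul_sub_sum_sq_stdGaussian (N := N) (s := 3 / 2)
    (by norm_num) (N / 9)
  have hpoint (a : Fin N → ℝ) : S a / √(∑ k, a k ^ 2)
      ≤ A * Y a / (√N / 3) + σ * exp (3 / 2 * (N / 9 - ∑ k, a k ^ 2)) := by
    convert div_le_div_add_mul_exp (ρ := √N / 3) (s := 3 / 2) (sqrt_nonneg _) (by positivity)
      (by norm_num) (hS a) hσ (hSY a) (hSσ a) using 4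
    rw [div_pow, sq_sqrt N.cast_nonneg, sq_sqrt (Finset.sum_nonneg fun k _ => sq_nonneg _)]
    ring
  calc _ ≤ ∫ a, (A * Y a / (√N / 3) + σ * exp (3 / 2 * (N / 9 - ∑ k, a k ^ 2)))
        ∂stdGaussian N :=
        integral_mono_of_nonneg (ae_of_all _ fun a => div_nonneg (hS a) (sqrt_nonneg _))
          (((hY.const_mul A).div_const _).add (hexp_int.const_mul _)) (ae_of_all _ hpoint)
    _ = 3 * A / √N * ∫ a, Y a ∂stdGaussian N
          + σ / √N * (√N * ∫ a, exp (3 / 2 * (N / 9 - ∑ k, a k ^ 2)) ∂stdGaussian N) := by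
        rw [integral_add ((hY.const_mul A).div_const _) (hexp_int.const_mul _), integral_div,
          integral_const_mul, integral_const_mul]
        field_simp
    _ ≤ 3 * A / √N * ∫ a, Y a ∂stdGaussian N + σ / √N * 1 := by
        gcongr
        exact sqrt_mul_integral_exp_sub_sum_sq_le_one N
    _ = _ := by rw [mul_one]

section Orthonormal

variable {Ω ι : Type*} [MeasurableSpace Ω] {μ : Measure Ω} [Fintype ι] {φ : ι → Ω → ℝ}

lemma integrable_mul_of_abs_le [IsFiniteMeasure μ] {f g : Ω → ℝ} (hf : Measurable f)
    (hg : Measurable g) {Bf Bg : ℝ} (hfB : ∀ x, |f x| ≤ Bf) (hgB : ∀ x, |g x| ≤ Bg) :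
    Integrable (fun x => f x * g x) μ :=
  .of_bound (hf.mul hg).aestronglyMeasurable (Bf * Bg) <| ae_of_all _ fun x => by
    rw [norm_mul]
    exact mul_le_mul (hfB x) (hgB x) (abs_nonneg _) ((abs_nonneg _).trans (hfB x))

lemma integral_sum_mul_sq_of_orthonormal [DecidableEq ι]
    (hint : ∀ i j, Integrable (fun x => φ i x * φ j x) μ)
    (horth : ∀ i j, ∫ x, φ i x * φ j x ∂μ = if i = j then 1 else 0) (a : ι → ℝ) :
    ∫ x, (∑ k, a k * φ k x) ^ 2 ∂μ = ∑ k, a k ^ 2 := by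
  have hexpand (x : Ω) :
      (∑ k, a k * φ k x) ^ 2 = ∑ i, ∑ j, a i * a j * (φ i x * φ j x) := by
    rw [sq, Finset.sum_mul_sum]
    exact Finset.sum_congr rfl fun i _ => Finset.sum_congr rfl fun j _ => by ring
  simp_rw [hexpand]
  rw [integral_finsetSum _ fun i _ => integrable_finsetSum _ fun j _ => (hint i j).const_mul _]
  refine Finset.sum_congr rfl fun i _ => ?_
  rw [integral_finsetSum _ fun j _ => (hint i j).const_mul _]
  simp [integral_const_mul, horth, sq]

end Orthonormal

lemma iSup_abs_sum_mul_le {Ω ι : Type*} [Fintype ι] (φ : ι → Ω → ℝ) (a : ι → ℝ) {B : ℝ}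
    (hB : ∀ x, ∑ k, φ k x ^ 2 ≤ B) :
    ⨆ x, |∑ k, a k * φ k x| ≤ √(∑ k, a k ^ 2) * √B := by
  refine Real.iSup_le (fun x => ?_) (by positivity)
  calc |∑ k, a k * φ k x|
      ≤ √((∑ k, a k ^ 2) * ∑ k, φ k x ^ 2) :=
        abs_le_sqrt (Finset.sum_mul_sq_le_sq_mul_sq _ _ _)
    _ ≤ √(∑ k, a k ^ 2) * √B := by
        rw [sqrt_mul (Finset.sum_nonneg fun k _ => sq_nonneg _)]
        gcongr
        exact hB x

/-- under the upper Weyl bound and a Marcinkiewicz–Zygmund type hypothesis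
with `M` points and constant `A`, one has `E[‖P_a‖_∞ / ‖P_a‖_2] ≤ C √(ln M)` with `C`
depending only on `A` and `c₂`. -/
theorem average_nikolskii_two_infty_upper (A c₂ : ℝ) (hA : 1 ≤ A) (hc₂ : 0 < c₂) :
    ∃ C : ℝ, 0 < C ∧
      ∀ (Ω : Type) [MeasurableSpace Ω] (μ : Measure Ω) [IsProbabilityMeasure μ]
        (N : ℕ), 1 ≤ N →
        ∀ φ : Fin N → Ω → ℝ,
          (∀ k, Measurable (φ k)) →
          (∀ k, ∃ B : ℝ, ∀ x, |φ k x| ≤ B) →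
          (∀ i j, (∫ x, φ i x * φ j x ∂μ) = if i = j then (1 : ℝ) else 0) →
          (∀ x, ∑ k, φ k x ^ 2 ≤ c₂ * N) →
          ∀ (M : ℕ), 2 ≤ M →
          ∀ xs : Fin M → Ω,
            (∀ b : Fin N → ℝ,
              (⨆ x, |∑ k, b k * φ k x|) ≤ A * ⨆ j, |∑ k, b k * φ k (xs j)|) →
            (∫ a, (⨆ x, |∑ k, a k * φ k x|) /
                (∫ x, |∑ k, a k * φ k x| ^ (2 : ℝ) ∂μ) ^ ((1 : ℝ) / 2)
              ∂(stdGaussian N)) ≤ C * Real.sqrt (Real.log M) := by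
  refine ⟨(6 * A + 2) * √c₂, by positivity, ?_⟩
  intro Ω _ μ _ N hN φ hmeas hbd horth hweyl M hM xs hMZ
  have hint (i j : Fin N) : Integrable (fun x => φ i x * φ j x) μ :=
    let ⟨_, hBi⟩ := hbd i
    let ⟨_, hBj⟩ := hbd j
    integrable_mul_of_abs_le (hmeas i) (hmeas j) hBi hBj
  have hnorm (a : Fin N → ℝ) :
      (∫ x, |∑ k, a k * φ k x| ^ (2 : ℝ) ∂μ) ^ ((1 : ℝ) / 2) = √(∑ k, a k ^ 2) := by
    simp_rw [rpow_two, sq_abs, integral_sum_mul_sq_of_orthonormal hint horth, ← sqrt_eq_rpow]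
  have hY := integral_iSup_abs_sum_mul_stdGaussian_le hM (fun j k => φ k (xs j))
    fun j => hweyl (xs j)
  have hlogM : 1 / 2 ≤ √(log M) := by
    rw [le_sqrt' (by norm_num)]
    linarith [log_two_gt_d9, log_le_log two_pos (show (2 : ℝ) ≤ M by exact_mod_cast hM)]
  simp_rw [hnorm]
  calc _ ≤ 3 * A / √N * ∫ a, ⨆ j, |∑ k, a k * φ k (xs j)| ∂stdGaussian N + √(c₂ * N) / √N :=
        integral_div_sqrt_sum_sq_le hN (integrable_iSup_abs_of_hasSubgaussianMGF fun j =>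
          hasSubgaussianMGF_sum_mul_stdGaussian fun k => φ k (xs j)) (sqrt_nonneg _)
          (fun _ => Real.iSup_nonneg fun _ => abs_nonneg _) hMZ
          fun a => (iSup_abs_sum_mul_le φ a hweyl).trans_eq (mul_comm _ _)
    _ ≤ 3 * A / √N * (2 * √(c₂ * N) * √(log M)) + √(c₂ * N) / √N := by gcongr
    _ ≤ (6 * A + 2) * √c₂ * √(log M) := by
        have hN' : (0 : ℝ) < √N := sqrt_pos.2 (by exact_mod_cast hN)
        rw [sqrt_mul hc₂.le]
        field_simp
        nlinarith [sqrt_nonneg c₂]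
end

section
/- Assume the lower Weyl bound Σ_{k=1}^N φ_k(x)² ≥ c₁ N for all x ∈ Ω (c₁ > 0), and assume there are points y_1, …, y_m ∈ Ω with m ≥ 2 such that Σ_{k=1}^N φ_k(y_i) φ_k(y_j) ≤ (c₁/2) N whenever i ≠ j. Then there is a constant c > 0 depending only on c₁ such that E[‖P_a‖_∞ / ‖P_a‖_2] ≥ c (ln m)^{1/2}. (Lower bound in the average Nikolskii factor N^{ave}_{2,∞}(𝒫_n) ≍ √(ln n).) -/
/-!
Normalise the kernel vectors `v i = (φ k (ys i))ₖ` to unit vectors `u i`; the separation hypothesis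
says `⟪u i, u j⟫ ≤ 1/2`. For `t = √(ln m)` and `r = t / 5` the translates of the slab
`{a | ∀ i, |⟪a, u i⟫| ≤ r}` by `t • u i` are pairwise disjoint, and so are those by `-t • u i`.
Since the Gaussian density satisfies `g (x + h) + g (x - h) = 2 cosh ⟪x, h⟫ e^{-|h|²/2} g x`,
each pair of opposite translates carries mass at least `2 e^{-t²/2}` times that of the slab,
which therefore has mass at most `e^{t²/2} / m = 1 / √m ≤ 3/4`. Together with Markov's bound
`P(|a|² ≥ 9N) ≤ 1/9`, with probability at least `5/36` some `|P_a (ys i)| = |v i| |⟪a, u i⟫|`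
exceeds `√(c₁ N) r` while `‖P_a‖₂ = |a| < 3 √N`.
-/

open MeasureTheory ProbabilityTheory

open Real Finset Function

section DotProduct

variable {ι : Type*} [Fintype ι]

lemma dotProduct_self_nonneg (v : ι → ℝ) : 0 ≤ v ⬝ᵥ v :=
  sum_nonneg fun k _ => mul_self_nonneg (v k)

lemma abs_dotProduct_le_of_abs_le {a w B : ι → ℝ} (hwB : ∀ k, |w k| ≤ B k) :
    |a ⬝ᵥ w| ≤ √(a ⬝ᵥ a) * √(B ⬝ᵥ B) := by
  have hw : w ⬝ᵥ w ≤ B ⬝ᵥ B :=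
    sum_le_sum fun k _ => abs_mul_abs_self (w k) ▸ mul_self_le_mul_self (abs_nonneg _) (hwB k)
  have hcs : (a ⬝ᵥ w) ^ 2 ≤ (a ⬝ᵥ a) * (w ⬝ᵥ w) := by
    simpa only [dotProduct, sq] using sum_mul_sq_le_sq_mul_sq univ a w
  rw [← sqrt_mul (dotProduct_self_nonneg a)]
  exact abs_le_sqrt (hcs.trans (mul_le_mul_of_nonneg_left hw (dotProduct_self_nonneg a)))

lemma inv_sqrt_smul_dotProduct_self {v : ι → ℝ} (hv : 0 < v ⬝ᵥ v) :
    ((√(v ⬝ᵥ v))⁻¹ • v) ⬝ᵥ ((√(v ⬝ᵥ v))⁻¹ • v) = 1 := by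
  rw [smul_dotProduct, dotProduct_smul, smul_eq_mul, smul_eq_mul, ← mul_assoc, ← mul_inv,
    mul_self_sqrt hv.le, inv_mul_cancel₀ hv.ne']

lemma inv_sqrt_smul_dotProduct_inv_sqrt_smul_le {v w : ι → ℝ} {κ ρ : ℝ} (hκ : 0 < κ)
    (hv : κ ≤ v ⬝ᵥ v) (hw : κ ≤ w ⬝ᵥ w) (hρ : 0 ≤ ρ) (hvw : v ⬝ᵥ w ≤ ρ * κ) :
    ((√(v ⬝ᵥ v))⁻¹ • v) ⬝ᵥ ((√(w ⬝ᵥ w))⁻¹ • w) ≤ ρ := by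
  have hden : κ ≤ √(v ⬝ᵥ v) * √(w ⬝ᵥ w) := calc
    κ = √κ * √κ := (mul_self_sqrt hκ.le).symm
    _ ≤ √(v ⬝ᵥ v) * √(w ⬝ᵥ w) := by gcongr
  rw [smul_dotProduct, dotProduct_smul, smul_eq_mul, smul_eq_mul, ← mul_assoc, ← mul_inv,
    inv_mul_eq_div, div_le_iff₀ (hκ.trans_le hden)]
  exact hvw.trans (mul_le_mul_of_nonneg_left hden hρ)

def slab {κ : Type*} (u : κ → ι → ℝ) (r : ℝ) : Set (ι → ℝ) :=
  {x | ∀ j, |x ⬝ᵥ u j| ≤ r}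

lemma pairwise_disjoint_preimage_sub_smul_slab {κ : Type*} {u : κ → ι → ℝ} {ρ r t : ℝ}
    (hu : ∀ i, u i ⬝ᵥ u i = 1) (hρ : Pairwise fun i j => u i ⬝ᵥ u j ≤ ρ)
    (hrt : 2 * r < |t| * (1 - ρ)) :
    Pairwise (Disjoint on fun i => (· - t • u i) ⁻¹' slab u r) := by
  intro i j hij
  refine Set.disjoint_left.2 fun x hxi hxj => ?_
  have hi : |x ⬝ᵥ u i - t| ≤ r := by
    simpa [sub_dotProduct, hu i] using hxi i
  have hj : |x ⬝ᵥ u i - t * (u j ⬝ᵥ u i)| ≤ r := by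
    simpa [sub_dotProduct, dotProduct_comm x] using hxj i
  have hgap : |t| * (1 - ρ) ≤ |t * (1 - u j ⬝ᵥ u i)| := by
    rw [abs_mul]
    gcongr
    exact (sub_le_sub_left (hρ hij.symm) 1).trans (le_abs_self _)
  have hclose : |t * (1 - u j ⬝ᵥ u i)| ≤ 2 * r := by
    calc |t * (1 - u j ⬝ᵥ u i)| = |(x ⬝ᵥ u i - t * (u j ⬝ᵥ u i)) - (x ⬝ᵥ u i - t)| := by
          congr 1; ring
      _ ≤ 2 * r := (abs_sub _ _).trans (by linarith)
  linarith

lemma measurableSet_slab {κ : Type*} [Countable κ] (u : κ → ι → ℝ) (r : ℝ) :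
    MeasurableSet (slab u r) := by
  rw [slab, Set.ofPred_forall]
  exact .iInter fun j => measurableSet_le (by fun_prop) measurable_const

end DotProduct

lemma stdGaussian_eq_pi (N : ℕ) : stdGaussian N = Measure.pi fun _ => gaussianReal 0 1 := rfl

instance inst_s2 (N : ℕ) : IsProbabilityMeasure (stdGaussian N) := by
  rw [stdGaussian_eq_pi]; infer_instance

noncomputable def stdGaussianPDFReal (N : ℕ) (x : Fin N → ℝ) : ℝ :=
  ∏ k, gaussianPDFReal 0 1 (x k)

lemma stdGaussianPDFReal_nonneg (N : ℕ) (x : Fin N → ℝ) : 0 ≤ stdGaussianPDFReal N x :=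
  prod_nonneg fun k _ => gaussianPDFReal_nonneg 0 1 (x k)

lemma measurable_stdGaussianPDFReal (N : ℕ) : Measurable (stdGaussianPDFReal N) :=
  Finset.measurable_prod _ fun k _ => (measurable_gaussianPDFReal 0 1).comp (measurable_pi_apply k)

lemma gaussianPDFReal_zero_one_add (s t : ℝ) :
    gaussianPDFReal 0 1 (s + t) = gaussianPDFReal 0 1 s * exp (-(s * t) - t ^ 2 / 2) := by
  simp only [gaussianPDFReal, NNReal.coe_one, mul_one, sub_zero, mul_assoc, ← exp_add]
  ring_nf

lemma stdGaussianPDFReal_add (N : ℕ) (x h : Fin N → ℝ) :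
    stdGaussianPDFReal N (x + h) = stdGaussianPDFReal N x * exp (-(x ⬝ᵥ h) - h ⬝ᵥ h / 2) := by
  simp only [stdGaussianPDFReal, Pi.add_apply, gaussianPDFReal_zero_one_add, prod_mul_distrib,
    ← exp_sum, dotProduct, sum_sub_distrib, sum_neg_distrib, sum_div, sq]

lemma two_mul_exp_mul_stdGaussianPDFReal_le (N : ℕ) (x h : Fin N → ℝ) :
    2 * exp (-(h ⬝ᵥ h) / 2) * stdGaussianPDFReal N x ≤
      stdGaussianPDFReal N (x + h) + stdGaussianPDFReal N (x - h) := by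
  have hcosh : 2 ≤ exp (x ⬝ᵥ h) + exp (-(x ⬝ᵥ h)) := by
    have := one_le_cosh (x ⬝ᵥ h); rw [cosh_eq] at this; linarith
  rw [sub_eq_add_neg, stdGaussianPDFReal_add, stdGaussianPDFReal_add]
  simp only [dotProduct_neg, neg_dotProduct, neg_neg, sub_eq_add_neg, exp_add, neg_div]
  calc 2 * exp (-(h ⬝ᵥ h / 2)) * stdGaussianPDFReal N x
      ≤ (exp (x ⬝ᵥ h) + exp (-(x ⬝ᵥ h))) * exp (-(h ⬝ᵥ h / 2)) * stdGaussianPDFReal N x :=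
        mul_le_mul_of_nonneg_right (mul_le_mul_of_nonneg_right hcosh (exp_pos _).le)
          (stdGaussianPDFReal_nonneg N x)
    _ = _ := by ring

lemma stdGaussian_eq_withDensity (N : ℕ) :
    stdGaussian N = volume.withDensity fun x => ENNReal.ofReal (stdGaussianPDFReal N x) := by
  refine Measure.pi_eq fun s hs => ?_
  have hprod : ∫ x, stdGaussianPDFReal N x ∂(Measure.pi fun k => volume.restrict (s k)) =
      ∏ k, ∫ t in s k, gaussianPDFReal 0 1 t :=
    integral_fintype_prod_eq_prod _
  rw [withDensity_apply _ (.univ_pi hs), volume_pi, Measure.restrict_pi_pi,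
    ← ofReal_integral_eq_lintegral_ofReal (f := stdGaussianPDFReal N)
      (Integrable.fintype_prod fun _ => (integrable_gaussianPDFReal 0 1).restrict)
      (ae_of_all _ (stdGaussianPDFReal_nonneg N)),
    hprod, ENNReal.ofReal_prod_of_nonneg fun k _ => setIntegral_nonneg (hs k) fun t _ =>
      gaussianPDFReal_nonneg 0 1 t]
  exact prod_congr rfl fun k _ => (gaussianReal_apply_eq_integral 0 one_ne_zero (s k)).symm

lemma stdGaussian_preimage_sub {N : ℕ} {D : Set (Fin N → ℝ)} (hD : MeasurableSet D)
    (h : Fin N → ℝ) :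
    stdGaussian N ((· - h) ⁻¹' D) = ∫⁻ x in D, ENNReal.ofReal (stdGaussianPDFReal N (x + h)) := by
  have hD' : MeasurableSet ((· - h) ⁻¹' D) := measurable_sub_const h hD
  rw [stdGaussian_eq_withDensity, withDensity_apply _ hD', ← lintegral_indicator hD',
    ← lintegral_indicator hD, ← lintegral_add_right_eq_self _ h]
  congr 1 with x
  classical
  simp only [Set.indicator_apply, Set.mem_preimage, add_sub_cancel_right]

lemma two_mul_exp_mul_measureReal_stdGaussian_le {N : ℕ} {D : Set (Fin N → ℝ)}
    (hD : MeasurableSet D) (h : Fin N → ℝ) :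
    2 * exp (-(h ⬝ᵥ h) / 2) * (stdGaussian N).real D ≤
      (stdGaussian N).real ((· - h) ⁻¹' D) + (stdGaussian N).real ((· + h) ⁻¹' D) := by
  have hG := measurable_stdGaussianPDFReal N
  have key : ENNReal.ofReal (2 * exp (-(h ⬝ᵥ h) / 2)) * stdGaussian N D ≤
      stdGaussian N ((· - h) ⁻¹' D) + stdGaussian N ((· - -h) ⁻¹' D) := by
    rw [stdGaussian_preimage_sub hD, stdGaussian_preimage_sub hD, stdGaussian_eq_withDensity,
      withDensity_apply _ hD, ← lintegral_const_mul _ hG.ennreal_ofReal,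
      ← lintegral_add_left (f := fun x => ENNReal.ofReal (stdGaussianPDFReal N (x + h)))
        (hG.comp (measurable_add_const h)).ennreal_ofReal]
    refine lintegral_mono fun x => ?_
    rw [← ENNReal.ofReal_mul (by positivity), ← ENNReal.ofReal_add (stdGaussianPDFReal_nonneg ..)
      (stdGaussianPDFReal_nonneg ..), ← sub_eq_add_neg]
    exact ENNReal.ofReal_le_ofReal (two_mul_exp_mul_stdGaussianPDFReal_le N x h)
  simp only [sub_neg_eq_add] at key
  have := ENNReal.toReal_mono (by finiteness) key
  rwa [ENNReal.toReal_mul, ENNReal.toReal_ofReal (by positivity),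
    ENNReal.toReal_add (by finiteness) (by finiteness)] at this

lemma natCast_mul_measureReal_stdGaussian_le_of_pairwise_disjoint {N m : ℕ} {D : Set (Fin N → ℝ)}
    (hD : MeasurableSet D) {h : Fin m → Fin N → ℝ} {s : ℝ} (hs : ∀ i, h i ⬝ᵥ h i ≤ s)
    (hsub : Pairwise (Disjoint on fun i => (· - h i) ⁻¹' D))
    (hadd : Pairwise (Disjoint on fun i => (· + h i) ⁻¹' D)) :
    m * (stdGaussian N).real D ≤ exp (s / 2) := by
  have hsum_le_one (f : Fin m → Set (Fin N → ℝ)) (hf : Pairwise (Disjoint on f))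
      (hfm : ∀ i, MeasurableSet (f i)) : ∑ i, (stdGaussian N).real (f i) ≤ 1 :=
    (measureReal_iUnion_fintype hf hfm).symm.trans_le measureReal_le_one
  have key : 2 * exp (-s / 2) * (m * (stdGaussian N).real D) ≤ 2 := calc
    _ = ∑ _i : Fin m, 2 * exp (-s / 2) * (stdGaussian N).real D := by simp; ring
    _ ≤ ∑ i, 2 * exp (-(h i ⬝ᵥ h i) / 2) * (stdGaussian N).real D := by
      gcongr with i; exact hs i
    _ ≤ ∑ i, ((stdGaussian N).real ((· - h i) ⁻¹' D) + (stdGaussian N).real ((· + h i) ⁻¹' D)) :=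
      sum_le_sum fun i _ => two_mul_exp_mul_measureReal_stdGaussian_le hD (h i)
    _ ≤ 1 + 1 := by
      rw [sum_add_distrib]
      exact add_le_add (hsum_le_one _ hsub fun i => measurable_sub_const _ hD)
        (hsum_le_one _ hadd fun i => measurable_add_const _ hD)
    _ = 2 := one_add_one_eq_two
  have hexp : exp (-s / 2) * exp (s / 2) = 1 := by rw [← exp_add]; ring_nf; exact exp_zero
  nlinarith [exp_pos (s / 2)]

lemma natCast_mul_measureReal_stdGaussian_slab_le {N m : ℕ} {u : Fin m → Fin N → ℝ}
    {ρ r t : ℝ} (hu : ∀ i, u i ⬝ᵥ u i = 1) (hρ : Pairwise fun i j => u i ⬝ᵥ u j ≤ ρ)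
    (hrt : 2 * r < |t| * (1 - ρ)) :
    m * (stdGaussian N).real (slab u r) ≤ exp (t ^ 2 / 2) := by
  refine natCast_mul_measureReal_stdGaussian_le_of_pairwise_disjoint (h := fun i => t • u i)
    (measurableSet_slab u r) (fun i => ?_) (pairwise_disjoint_preimage_sub_smul_slab hu hρ hrt) ?_
  · simp [hu i, sq]
  · simpa [neg_smul] using pairwise_disjoint_preimage_sub_smul_slab (t := -t) hu hρ
      (by rwa [abs_neg])

lemma measureReal_stdGaussian_slab_le {N m : ℕ} (hm : 2 ≤ m) {u : Fin m → Fin N → ℝ}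
    (hu : ∀ i, u i ⬝ᵥ u i = 1) (hρ : Pairwise fun i j => u i ⬝ᵥ u j ≤ 1 / 2) :
    (stdGaussian N).real (slab u (√(log m) / 5)) ≤ 3 / 4 := by
  have hm' : (2 : ℝ) ≤ m := by exact_mod_cast hm
  have hlog : 0 < log m := log_pos (by linarith)
  have hL : 0 < √(log m) := sqrt_pos.2 hlog
  have hball := natCast_mul_measureReal_stdGaussian_slab_le (r := √(log m) / 5) (t := √(log m))
    hu hρ (by rw [abs_of_pos hL]; linarith)
  have hexp : exp (√(log m) ^ 2 / 2) ^ 2 = m := by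
    rw [sq_sqrt hlog.le, sq, ← exp_add, add_halves, exp_log (by linarith)]
  set γ := (stdGaussian N).real (slab u (√(log m) / 5))
  have hsq : m * (m * γ ^ 2) ≤ m * 1 := by
    nlinarith [pow_le_pow_left₀ (mul_nonneg (Nat.cast_nonneg m) measureReal_nonneg) hball 2]
  have hγsq : m * γ ^ 2 ≤ 1 := le_of_mul_le_mul_left hsq (by linarith)
  nlinarith [measureReal_nonneg (μ := stdGaussian N) (s := slab u (√(log m) / 5))]

lemma integrable_mul_self_gaussianReal (μ : ℝ) (v : NNReal) :
    Integrable (fun t : ℝ => t * t) (gaussianReal μ v) := by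
  simpa [sq] using (memLp_id_gaussianReal (μ := μ) (v := v) 2).integrable_sq

lemma integral_mul_self_gaussianReal_zero (v : NNReal) : ∫ t, t * t ∂gaussianReal 0 v = v := by
  simpa [sq] using (variance_of_integral_eq_zero aemeasurable_id'
    integral_id_gaussianReal).symm.trans (variance_fun_id_gaussianReal (μ := 0) (v := v))

lemma integrable_dotProduct_self_stdGaussian (N : ℕ) :
    Integrable (fun x => x ⬝ᵥ x) (stdGaussian N) := by
  rw [stdGaussian_eq_pi]
  exact integrable_finsetSum _ fun k _ => integrable_comp_eval (f := fun t => t * t) (i := k)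
    (integrable_mul_self_gaussianReal 0 1)

lemma integral_dotProduct_self_stdGaussian (N : ℕ) : ∫ x, x ⬝ᵥ x ∂stdGaussian N = N := by
  rw [stdGaussian_eq_pi]
  simp only [dotProduct]
  rw [integral_finsetSum _ fun k _ => integrable_comp_eval (f := fun t => t * t) (i := k)
    (integrable_mul_self_gaussianReal 0 1)]
  simp [integral_comp_eval (μ := fun _ : Fin N => gaussianReal 0 1)
    (integrable_mul_self_gaussianReal 0 1).aestronglyMeasurable,
    integral_mul_self_gaussianReal_zero]

lemma measureReal_stdGaussian_le_dotProduct_self_le (N : ℕ) {t : ℝ} (ht : 0 < t) :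
    (stdGaussian N).real {x | t ≤ x ⬝ᵥ x} ≤ N / t := by
  rw [le_div_iff₀' ht, ← integral_dotProduct_self_stdGaussian N]
  exact mul_meas_ge_le_integral_of_nonneg (ae_of_all _ dotProduct_self_nonneg)
    (integrable_dotProduct_self_stdGaussian N) t

lemma mul_le_integral_of_le_on_compl {α : Type*} [MeasurableSpace α] {ν : Measure α}
    [IsProbabilityMeasure ν] {f : α → ℝ} {s : Set α} {β v : ℝ} (hf : Integrable f ν)
    (hf0 : 0 ≤ f) (hs : MeasurableSet s) (hsβ : ν.real s ≤ β) (hv : 0 ≤ v)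
    (hfv : ∀ x ∉ s, v ≤ f x) :
    (1 - β) * v ≤ ∫ x, f x ∂ν := calc
  (1 - β) * v ≤ v * ν.real sᶜ := by rw [probReal_compl_eq_one_sub hs]; nlinarith
  _ ≤ ∫ x in sᶜ, f x ∂ν :=
    setIntegral_ge_of_const_le_real hs.compl (measure_ne_top _ _) hfv hf.integrableOn
  _ ≤ ∫ x, f x ∂ν := setIntegral_le_integral hf (ae_of_all _ hf0)

section RandomPolynomial

variable {Ω ι : Type*} [Fintype ι] {φ : ι → Ω → ℝ}

lemma integral_abs_sum_mul_rpow_two_rpow_half_eq_sqrt [DecidableEq ι] [MeasurableSpace Ω]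
    {μ : Measure Ω}
    (hφ : ∀ k, MemLp (φ k) 2 μ)
    (hortho : ∀ i j, ∫ x, φ i x * φ j x ∂μ = if i = j then 1 else 0) (a : ι → ℝ) :
    (∫ x, |∑ k, a k * φ k x| ^ (2 : ℝ) ∂μ) ^ ((1 : ℝ) / 2) = √(a ⬝ᵥ a) := by
  have hint (k l : ι) : Integrable (fun x => a k * a l * (φ k x * φ l x)) μ :=
    ((hφ k).integrable_mul (hφ l)).const_mul _
  have hexpand (x : Ω) : |∑ k, a k * φ k x| ^ (2 : ℝ) = ∑ k, ∑ l, a k * a l * (φ k x * φ l x) := by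
    rw [rpow_two, sq_abs, sq, sum_mul_sum]
    exact sum_congr rfl fun k _ => sum_congr rfl fun l _ => by ring
  simp_rw [hexpand]
  rw [integral_finsetSum _ fun k _ => integrable_finsetSum _ fun l _ => hint k l, ← sqrt_eq_rpow]
  simp_rw [integral_finsetSum _ fun l _ => hint _ l, integral_const_mul, hortho]
  simp [dotProduct]

lemma bddAbove_range_abs_sum_mul {B : ι → ℝ} (hB : ∀ k x, |φ k x| ≤ B k) (a : ι → ℝ) :
    BddAbove (Set.range fun x => |∑ k, a k * φ k x|) :=
  ⟨_, Set.forall_mem_range.2 fun x => abs_dotProduct_le_of_abs_le (a := a) fun k => hB k x⟩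

lemma sqrt_mul_div_sqrt_le_iSup_abs_sum_mul_div_sqrt {B : ι → ℝ} (hB : ∀ k x, |φ k x| ≤ B k)
    {a : ι → ℝ} {y : Ω} {κ r K : ℝ} (hy : κ ≤ (fun k => φ k y) ⬝ᵥ (fun k => φ k y))
    (hr : 0 < r) (ha : r < |a ⬝ᵥ ((√((fun k => φ k y) ⬝ᵥ (fun k => φ k y)))⁻¹ • fun k => φ k y)|)
    (hK : a ⬝ᵥ a ≤ K) :
    √κ * r / √K ≤ (⨆ x, |∑ k, a k * φ k x|) / √(a ⬝ᵥ a) := by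
  set v := fun k => φ k y
  have ha0 : 0 < √(a ⬝ᵥ a) := by
    refine sqrt_pos.2 ((dotProduct_self_nonneg a).lt_of_ne fun h => ?_)
    rw [eq_comm, dotProduct_self_eq_zero] at h
    simp [h] at ha
    linarith
  have hv0 : √(v ⬝ᵥ v) ≠ 0 := fun h => by simp [h] at ha; linarith
  have hv : a ⬝ᵥ v = √(v ⬝ᵥ v) * (a ⬝ᵥ ((√(v ⬝ᵥ v))⁻¹ • v)) := by
    rw [dotProduct_smul, smul_eq_mul, ← mul_assoc, mul_inv_cancel₀ hv0, one_mul]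
  calc √κ * r / √K ≤ |a ⬝ᵥ v| / √(a ⬝ᵥ a) := by
        refine div_le_div₀ (abs_nonneg _) ?_ ha0 (sqrt_le_sqrt hK)
        rw [hv, abs_mul, abs_of_nonneg (sqrt_nonneg _)]
        exact mul_le_mul (sqrt_le_sqrt hy) ha.le hr.le (sqrt_nonneg _)
    _ ≤ (⨆ x, |∑ k, a k * φ k x|) / √(a ⬝ᵥ a) :=
        div_le_div_of_nonneg_right (le_ciSup (bddAbove_range_abs_sum_mul hB a) y) ha0.le

lemma integrable_iSup_abs_sum_mul_div_sqrt {B : ι → ℝ} (hB : ∀ k x, |φ k x| ≤ B k)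
    (ν : Measure (ι → ℝ)) [IsFiniteMeasure ν] :
    Integrable (fun a => (⨆ x, |∑ k, a k * φ k x|) / √(a ⬝ᵥ a)) ν := by
  have hle (a : ι → ℝ) (x : Ω) : |∑ k, a k * φ k x| ≤ √(a ⬝ᵥ a) * √(B ⬝ᵥ B) :=
    abs_dotProduct_le_of_abs_le fun k => hB k x
  have hsup : Measurable fun a : ι → ℝ => ⨆ x, |∑ k, a k * φ k x| :=
    (lowerSemicontinuous_ciSup (bddAbove_range_abs_sum_mul hB)
      fun x => (by fun_prop : Continuous _).lowerSemicontinuous).measurable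
  refine .of_bound (hsup.div (by fun_prop)).aestronglyMeasurable √(B ⬝ᵥ B)
    (ae_of_all _ fun a => ?_)
  rw [norm_of_nonneg (div_nonneg (iSup_nonneg fun x => abs_nonneg _) (sqrt_nonneg _))]
  exact div_le_of_le_mul₀ (sqrt_nonneg _) (sqrt_nonneg _)
    (Real.iSup_le (fun x => (hle a x).trans_eq (mul_comm _ _)) (by positivity))

end RandomPolynomial

/-- under the lower Weyl bound and the separated-points hypothesis
(`m` points whose off-diagonal kernel values are at most `(c₁/2) N`), one has
`E[‖P_a‖_∞ / ‖P_a‖_2] ≥ c √(ln m)` with `c > 0` depending only on `c₁`. -/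
theorem average_nikolskii_two_infty_lower (c₁ : ℝ) (hc₁ : 0 < c₁) :
    ∃ c : ℝ, 0 < c ∧
      ∀ (Ω : Type) [MeasurableSpace Ω] (μ : Measure Ω) [IsProbabilityMeasure μ]
        (N : ℕ), 1 ≤ N →
        ∀ φ : Fin N → Ω → ℝ,
          (∀ k, Measurable (φ k)) →
          (∀ k, ∃ B : ℝ, ∀ x, |φ k x| ≤ B) →
          (∀ i j, (∫ x, φ i x * φ j x ∂μ) = if i = j then (1 : ℝ) else 0) →
          (∀ x, c₁ * N ≤ ∑ k, φ k x ^ 2) →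
          ∀ (m : ℕ), 2 ≤ m →
          ∀ ys : Fin m → Ω,
            (∀ i j : Fin m, i ≠ j → ∑ k, φ k (ys i) * φ k (ys j) ≤ c₁ / 2 * N) →
            c * Real.sqrt (Real.log m) ≤
              ∫ a, (⨆ x, |∑ k, a k * φ k x|) /
                  (∫ x, |∑ k, a k * φ k x| ^ (2 : ℝ) ∂μ) ^ ((1 : ℝ) / 2)
                ∂(stdGaussian N) := by
  refine ⟨√c₁ / 108, by positivity, ?_⟩
  intro Ω _ μ _ N hN φ hφ hφB hortho hweyl m hm ys hsep
  choose B hB using hφB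
  have hN0 : (0 : ℝ) < N := by exact_mod_cast hN
  have hκ : 0 < c₁ * N := mul_pos hc₁ hN0
  set v : Fin m → Fin N → ℝ := fun i k => φ k (ys i)
  have hv (i : Fin m) : c₁ * N ≤ v i ⬝ᵥ v i := by simpa [dotProduct, sq] using hweyl (ys i)
  set u : Fin m → Fin N → ℝ := fun i => (√(v i ⬝ᵥ v i))⁻¹ • v i
  have hu (i : Fin m) : u i ⬝ᵥ u i = 1 :=
    inv_sqrt_smul_dotProduct_self (hκ.trans_le (hv i))
  have hρ : Pairwise fun i j => u i ⬝ᵥ u j ≤ 1 / 2 := fun i j hij =>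
    inv_sqrt_smul_dotProduct_inv_sqrt_smul_le hκ (hv i) (hv j) (by norm_num)
      ((hsep i j hij).trans_eq (by ring))
  set r := √(log m) / 5
  have hr : 0 < r := div_pos (sqrt_pos.2 (log_pos (by exact_mod_cast hm))) (by norm_num)
  set bad := slab u r ∪ {a | 9 * N ≤ a ⬝ᵥ a}
  have hbad : (stdGaussian N).real bad ≤ 3 / 4 + 1 / 9 := by
    refine (measureReal_union_le _ _).trans
      (add_le_add (measureReal_stdGaussian_slab_le hm hu hρ) ?_)
    exact (measureReal_stdGaussian_le_dotProduct_self_le N (by positivity)).trans_eq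
      (by field_simp)
  have hgood (a : Fin N → ℝ) (ha : a ∉ bad) :
      √c₁ * r / 3 ≤ (⨆ x, |∑ k, a k * φ k x|) / √(a ⬝ᵥ a) := by
    simp only [bad, slab, Set.mem_union, Set.mem_ofPred_eq, not_or, not_forall, not_le] at ha
    obtain ⟨⟨i, hi⟩, ha9⟩ := ha
    calc √c₁ * r / 3 = √(c₁ * N) * r / √(9 * N) := by
          rw [sqrt_mul hc₁.le, sqrt_mul (by norm_num), show (9 : ℝ) = 3 ^ 2 by norm_num,
            sqrt_sq (by norm_num)]
          field_simp
      _ ≤ _ := sqrt_mul_div_sqrt_le_iSup_abs_sum_mul_div_sqrt hB (hv i) hr hi ha9.le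
  have hL2 (a : Fin N → ℝ) : (∫ x, |∑ k, a k * φ k x| ^ (2 : ℝ) ∂μ) ^ ((1 : ℝ) / 2) = √(a ⬝ᵥ a) :=
    integral_abs_sum_mul_rpow_two_rpow_half_eq_sqrt
      (fun k => .of_bound (hφ k).aestronglyMeasurable (B k) (ae_of_all _ (hB k))) hortho a
  simp_rw [hL2]
  calc √c₁ / 108 * √(log m) = (1 - (3 / 4 + 1 / 9)) * (√c₁ * r / 3) := by ring
    _ ≤ _ := mul_le_integral_of_le_on_compl (integrable_iSup_abs_sum_mul_div_sqrt hB _)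
      (fun a => div_nonneg (iSup_nonneg fun x => abs_nonneg _) (sqrt_nonneg _))
      ((measurableSet_slab u r).union (measurableSet_le measurable_const (by fun_prop)))
      hbad (by positivity) hgood
end
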